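/- Let δ > 0 and let n : [−1,1] × [−δ,δ] → ℝ² be continuously differentiable with |n(x₁,x₂)| = 1 for all (x₁,x₂), and with n(−1,x₂) = (0,1) and n(1,x₂) = (0,−1) for all x₂ ∈ [−δ,δ]. Then ∫_{−δ}^{δ} ∫_{−1}^{1} |∂_{x₁} n(x₁,x₂)|² dx₁ dx₂ ≥ δπ², and consequently ∫_{−δ}^{δ} ∫_{−1}^{1} |∇n(x₁,x₂)|² dx₁ dx₂ ≥ δπ². -/

import Mathlib

/-! For fixed `x₂`, the slice `γ = n(·, x₂)` is a curve on the unit circle joining the antipodal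
points `(0, 1)` and `(0, -1)`, so its length is at least `π`, and Cauchy–Schwarz turns this into
`∫ |γ'|² ≥ π² / 2`; integrating over `x₂ ∈ [-δ, δ]` gives `δπ²`. The length bound comes from
comparing `|γ'|` with the derivative of `arcsin ⟪e, γ⟫`: since `γ' ⊥ γ`, the component of `γ'`
along `e` is at most `√(1 - ⟪e, γ⟫²) |γ'|`. -/

open Real MeasureTheory Set Filter Topology Function
open scoped RealInnerProductSpace

theorem arcsin_sub_arcsin_le_integral {f f' g : ℝ → ℝ} {a b : ℝ} (hab : a ≤ b)
    (hf : ContinuousOn f (Icc a b)) (hf' : ∀ x ∈ Ioo a b, HasDerivAt f (f' x) x)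
    (hf1 : ∀ x ∈ Ioo a b, f x ^ 2 ≤ 1) (hg : IntegrableOn g (Icc a b))
    (hg0 : ∀ x ∈ Ioo a b, 0 ≤ g x)
    (hbound : ∀ x ∈ Ioo a b, f' x ^ 2 ≤ (1 - f x ^ 2) * g x ^ 2) :
    arcsin (f a) - arcsin (f b) ≤ ∫ x in a..b, g x := by
  -- `arcsin ∘ f` need not be differentiable where `|f| = 1`; dilate by `c > 1` and let `c → 1`.
  have hdilate : ∀ c > 1, arcsin (f a / c) - arcsin (f b / c) ≤ ∫ x in a..b, g x := by
    intro c hc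
    have hderiv : ∀ x ∈ Ioo a b, HasDerivAt (fun y => -arcsin (f y / c))
        (-(1 / √(1 - (f x / c) ^ 2) * (f' x / c))) x := by
      intro x hx
      have hlt : (f x / c) ^ 2 < 1 := by
        rw [div_pow, div_lt_one (by positivity)]
        nlinarith [hf1 x hx]
      have habs : |f x / c| < 1 := by
        simpa using abs_lt_of_sq_lt_sq (by simpa using hlt) zero_le_one
      exact ((hasDerivAt_arcsin (by grind [abs_lt]) (by grind [abs_lt])).comp x
        ((hf' x hx).div_const c)).neg
    have hle : ∀ x ∈ Ioo a b, -(1 / √(1 - (f x / c) ^ 2) * (f' x / c)) ≤ g x := by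
      intro x hx
      have hc1 : 1 ≤ c ^ 2 := by nlinarith
      have hc2 : 0 < c ^ 2 - f x ^ 2 := by nlinarith [hf1 x hx]
      have hpos : 0 ≤ 1 - (f x / c) ^ 2 := by
        rw [div_pow, sub_nonneg, div_le_one (by positivity)]
        linarith
      have hsq : (1 / √(1 - (f x / c) ^ 2) * (f' x / c)) ^ 2 = f' x ^ 2 / (c ^ 2 - f x ^ 2) := by
        rw [mul_pow, one_div_pow, sq_sqrt hpos]
        field_simp
      have hsq_le : (1 / √(1 - (f x / c) ^ 2) * (f' x / c)) ^ 2 ≤ g x ^ 2 := by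
        rw [hsq, div_le_iff₀ hc2]
        nlinarith [hbound x hx, mul_le_mul_of_nonneg_right
          (by linarith : 1 - f x ^ 2 ≤ c ^ 2 - f x ^ 2) (sq_nonneg (g x))]
      exact (neg_le_abs _).trans (abs_le_of_sq_le_sq hsq_le (hg0 x hx))
    have := intervalIntegral.sub_le_integral_of_hasDeriv_right_of_le
      (g := fun y => -arcsin (f y / c)) hab
      ((continuous_arcsin.comp_continuousOn (hf.div_const c)).neg)
      (fun x hx => (hderiv x hx).hasDerivWithinAt) hg hle
    linarith
  have hlim : Tendsto (fun c => arcsin (f a / c) - arcsin (f b / c)) (𝓝[>] 1)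
      (𝓝 (arcsin (f a) - arcsin (f b))) := by
    have hcont : ContinuousAt (fun c => arcsin (f a / c) - arcsin (f b / c)) 1 := by
      fun_prop (disch := norm_num)
    simpa using hcont.tendsto.mono_left nhdsWithin_le_nhds
  exact le_of_tendsto hlim (eventually_nhdsWithin_of_forall hdilate)

theorem sq_intervalIntegral_le_mul_intervalIntegral_sq {g : ℝ → ℝ} {a b : ℝ} (hab : a ≤ b)
    (hg : IntervalIntegrable g volume a b) (hg2 : IntervalIntegrable (g · ^ 2) volume a b) :
    (∫ x in a..b, g x) ^ 2 ≤ (b - a) * ∫ x in a..b, g x ^ 2 := by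
  have hquad : ∀ t : ℝ,
      0 ≤ (b - a) * (t * t) + (-2 * ∫ x in a..b, g x) * t + ∫ x in a..b, g x ^ 2 := by
    intro t
    have hexp : ∫ x in a..b, (g x - t) ^ 2
        = (b - a) * (t * t) + (-2 * ∫ x in a..b, g x) * t + ∫ x in a..b, g x ^ 2 := by
      have hlin := (hg.const_mul 2).mul_const t
      simp_rw [sub_sq]
      rw [intervalIntegral.integral_add (hg2.sub hlin) intervalIntegrable_const,
        intervalIntegral.integral_sub hg2 hlin, intervalIntegral.integral_mul_const,
        intervalIntegral.integral_const_mul, intervalIntegral.integral_const, smul_eq_mul]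
      ring
    rw [← hexp]
    exact intervalIntegral.integral_nonneg hab fun x _ => sq_nonneg _
  have := discrim_le_zero hquad
  rw [discrim] at this
  linarith

theorem ContinuousOn.continuousOn_intervalIntegral_of_Icc_prod {E : Type*}
    [NormedAddCommGroup E] [NormedSpace ℝ E] {f : ℝ → ℝ → E} {a b c d : ℝ} (hab : a ≤ b)
    (hcd : c ≤ d) (hf : ContinuousOn (uncurry f) (Icc a b ×ˢ Icc c d)) :
    ContinuousOn (fun y => ∫ x in a..b, f x y) (Icc c d) := by
  -- Clamping both coordinates to the rectangle extends `f` continuously to the whole plane.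
  have hext : Continuous (uncurry fun y x => f (projIcc a b hab x) (projIcc c d hcd y)) :=
    hf.comp_continuous
      (f := fun p : ℝ × ℝ => ((projIcc a b hab p.2 : ℝ), (projIcc c d hcd p.1 : ℝ))) (by fun_prop)
      fun p => ⟨(projIcc a b hab p.2).2, (projIcc c d hcd p.1).2⟩
  refine (intervalIntegral.continuous_parametric_intervalIntegral_of_continuous' hext a b)
    |>.continuousOn.congr fun y hy => intervalIntegral.integral_congr fun x hx => ?_
  rw [uIcc_of_le hab] at hx
  simp [projIcc_of_mem _ hx, projIcc_of_mem _ hy]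

section InnerProductSpace

variable {E : Type*} [NormedAddCommGroup E] [InnerProductSpace ℝ E]

theorem HasDerivAt.inner_eq_zero_of_eventually_norm_eq {γ : ℝ → E} {v : E} {x r : ℝ}
    (hγ : HasDerivAt γ v x) (h : ∀ᶠ y in 𝓝 x, ‖γ y‖ = r) : ⟪γ x, v⟫ = 0 := by
  have hconst : HasDerivAt (‖γ ·‖ ^ 2) 0 x :=
    (hasDerivAt_const x (r ^ 2)).congr_of_eventuallyEq (h.mono fun y hy => by simp [hy])
  simpa using hγ.norm_sq.unique hconst

theorem sq_inner_le_of_inner_eq_zero {u v : E} (e : E) (hu : ‖u‖ = 1) (huv : ⟪u, v⟫ = 0) :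
    ⟪e, v⟫ ^ 2 ≤ (‖e‖ ^ 2 - ⟪e, u⟫ ^ 2) * ‖v‖ ^ 2 := by
  -- Cauchy–Schwarz against the component of `e` orthogonal to `u`.
  set w := e - ⟪e, u⟫ • u
  have hwv : ⟪w, v⟫ = ⟪e, v⟫ := by simp [w, inner_sub_left, inner_smul_left, huv]
  have hw : ‖w‖ ^ 2 = ‖e‖ ^ 2 - ⟪e, u⟫ ^ 2 := by
    rw [norm_sub_sq_real, inner_smul_right, norm_smul, mul_pow, hu, Real.norm_eq_abs, sq_abs]
    ring
  rw [← hwv, ← hw, ← mul_pow, ← sq_abs]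
  exact pow_le_pow_left₀ (abs_nonneg _) (abs_real_inner_le_norm w v) 2

variable {γ γ' : ℝ → E} {e : E} {a b : ℝ}

theorem pi_le_integral_norm_deriv_of_inner_eq_one_of_inner_eq_neg_one (hab : a ≤ b)
    (hγ : ContinuousOn γ (Icc a b)) (hγ' : ∀ x ∈ Ioo a b, HasDerivAt γ (γ' x) x)
    (hunit : ∀ x ∈ Icc a b, ‖γ x‖ = 1) (he : ‖e‖ = 1) (ha : ⟪e, γ a⟫ = 1)
    (hb : ⟪e, γ b⟫ = -1) (hint : IntegrableOn (‖γ' ·‖) (Icc a b)) :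
    π ≤ ∫ x in a..b, ‖γ' x‖ := by
  have hinner_sq_le : ∀ x ∈ Ioo a b, ⟪e, γ x⟫ ^ 2 ≤ 1 := fun x hx =>
    (sq_le_one_iff_abs_le_one _).2 <| by
      simpa [he, hunit x (Ioo_subset_Icc_self hx)] using abs_real_inner_le_norm e (γ x)
  have horth : ∀ x ∈ Ioo a b, ⟪γ x, γ' x⟫ = 0 := fun x hx =>
    (hγ' x hx).inner_eq_zero_of_eventually_norm_eq
      (eventually_of_mem (Icc_mem_nhds hx.1 hx.2) hunit)
  have := arcsin_sub_arcsin_le_integral (f := fun x => ⟪e, γ x⟫) (f' := fun x => ⟪e, γ' x⟫)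
    hab (continuousOn_const.inner hγ)
    (fun x hx => by simpa using (hasDerivAt_const x e).inner ℝ (hγ' x hx))
    hinner_sq_le hint (fun _ _ => norm_nonneg _)
    (fun x hx => by
      simpa [he] using sq_inner_le_of_inner_eq_zero e (hunit x (Ioo_subset_Icc_self hx))
        (horth x hx))
  simpa [ha, hb] using this

theorem pi_sq_le_mul_integral_norm_deriv_sq_of_inner_eq_one_of_inner_eq_neg_one (hab : a ≤ b)
    (hγ : ContinuousOn γ (Icc a b)) (hγ' : ∀ x ∈ Ioo a b, HasDerivAt γ (γ' x) x)
    (hγ'c : ContinuousOn γ' (Icc a b)) (hunit : ∀ x ∈ Icc a b, ‖γ x‖ = 1) (he : ‖e‖ = 1)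
    (ha : ⟪e, γ a⟫ = 1) (hb : ⟪e, γ b⟫ = -1) :
    π ^ 2 ≤ (b - a) * ∫ x in a..b, ‖γ' x‖ ^ 2 :=
  calc π ^ 2 ≤ (∫ x in a..b, ‖γ' x‖) ^ 2 := pow_le_pow_left₀ pi_nonneg
        (pi_le_integral_norm_deriv_of_inner_eq_one_of_inner_eq_neg_one hab hγ hγ' hunit he ha
          hb hγ'c.norm.integrableOn_Icc) 2
    _ ≤ (b - a) * ∫ x in a..b, ‖γ' x‖ ^ 2 :=
      sq_intervalIntegral_le_mul_intervalIntegral_sq hab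
        (hγ'c.norm.intervalIntegrable_of_Icc hab) ((hγ'c.norm.pow 2).intervalIntegrable_of_Icc hab)

end InnerProductSpace

theorem stmt15 (δ : ℝ) (hδ : 0 < δ)
    (n d1 d2 : ℝ → ℝ → EuclideanSpace ℝ (Fin 2))
    (hd1 : ∀ x₁ ∈ Set.Icc (-1 : ℝ) 1, ∀ x₂ ∈ Set.Icc (-δ) δ,
      HasDerivWithinAt (fun y => n y x₂) (d1 x₁ x₂) (Set.Icc (-1) 1) x₁)
    (hc1 : ContinuousOn (fun p : ℝ × ℝ => d1 p.1 p.2) (Set.Icc (-1) 1 ×ˢ Set.Icc (-δ) δ))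
    (hc2 : ContinuousOn (fun p : ℝ × ℝ => d2 p.1 p.2) (Set.Icc (-1) 1 ×ˢ Set.Icc (-δ) δ))
    (hunit : ∀ x₁ ∈ Set.Icc (-1 : ℝ) 1, ∀ x₂ ∈ Set.Icc (-δ) δ, ‖n x₁ x₂‖ = 1)
    (hleft : ∀ x₂ ∈ Set.Icc (-δ) δ, n (-1) x₂ 0 = 0 ∧ n (-1) x₂ 1 = 1)
    (hright : ∀ x₂ ∈ Set.Icc (-δ) δ, n 1 x₂ 0 = 0 ∧ n 1 x₂ 1 = -1) :
    (δ * Real.pi ^ 2 ≤ ∫ x₂ in (-δ)..δ, ∫ x₁ in (-1 : ℝ)..1, ‖d1 x₁ x₂‖ ^ 2) ∧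
    (δ * Real.pi ^ 2 ≤
      ∫ x₂ in (-δ)..δ, ∫ x₁ in (-1 : ℝ)..1, (‖d1 x₁ x₂‖ ^ 2 + ‖d2 x₁ x₂‖ ^ 2)) := by
  have hδ' : -δ ≤ δ := by linarith
  have hslice : ∀ x₂ ∈ Icc (-δ) δ, π ^ 2 / 2 ≤ ∫ x₁ in (-1 : ℝ)..1, ‖d1 x₁ x₂‖ ^ 2 := by
    intro x₂ hx₂
    have := pi_sq_le_mul_integral_norm_deriv_sq_of_inner_eq_one_of_inner_eq_neg_one
      (γ := (n · x₂)) (e := EuclideanSpace.single 1 1) (by norm_num)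
      (fun x hx => (hd1 x hx x₂ hx₂).continuousWithinAt)
      (fun x hx => (hd1 x (Ioo_subset_Icc_self hx) x₂ hx₂).hasDerivAt (Icc_mem_nhds hx.1 hx.2))
      (hc1.uncurry_right x₂ hx₂) (fun x hx => hunit x hx x₂ hx₂) (by simp)
      (by simp [EuclideanSpace.inner_single_left, hleft x₂ hx₂])
      (by simp [EuclideanSpace.inner_single_left, hright x₂ hx₂])
    linarith
  have hint : ∀ F : ℝ → ℝ → ℝ, ContinuousOn (uncurry F) (Icc (-1) 1 ×ˢ Icc (-δ) δ) →
      IntervalIntegrable (fun x₂ => ∫ x₁ in (-1 : ℝ)..1, F x₁ x₂) volume (-δ) δ := fun F hF =>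
    (hF.continuousOn_intervalIntegral_of_Icc_prod (by norm_num) hδ').intervalIntegrable_of_Icc hδ'
  have hd1sq : ContinuousOn (uncurry fun x₁ x₂ => ‖d1 x₁ x₂‖ ^ 2) (Icc (-1) 1 ×ˢ Icc (-δ) δ) :=
    fun p hp => (hc1 p hp).norm.pow 2
  have hsum : ContinuousOn (uncurry fun x₁ x₂ => ‖d1 x₁ x₂‖ ^ 2 + ‖d2 x₁ x₂‖ ^ 2)
      (Icc (-1) 1 ×ˢ Icc (-δ) δ) := fun p hp => (hd1sq p hp).add ((hc2 p hp).norm.pow 2)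
  have hpart1 : δ * π ^ 2 ≤ ∫ x₂ in (-δ)..δ, ∫ x₁ in (-1 : ℝ)..1, ‖d1 x₁ x₂‖ ^ 2 :=
    calc δ * π ^ 2 = ∫ _ in (-δ)..δ, π ^ 2 / 2 := by
          rw [intervalIntegral.integral_const, smul_eq_mul]; ring
      _ ≤ _ := intervalIntegral.integral_mono_on hδ' intervalIntegrable_const (hint _ hd1sq) hslice
  refine ⟨hpart1, hpart1.trans <| intervalIntegral.integral_mono_on hδ' (hint _ hd1sq)
    (hint _ hsum) fun x₂ hx₂ => intervalIntegral.integral_mono_on (by norm_num) ?_ ?_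
      fun x₁ _ => le_add_of_nonneg_right (by positivity)⟩
  · exact (hd1sq.uncurry_right x₂ hx₂).intervalIntegrable_of_Icc (by norm_num)
  · exact (hsum.uncurry_right x₂ hx₂).intervalIntegrable_of_Icc (by norm_num)
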